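/- Assume q = 2m and let 1 ≤ i < j ≤ m. The unit 2-vectors ρ_{ij}^∓ = (1/√2)(e_{2i−1} ∧ e_{2j} ∓ e_{2i} ∧ e_{2j−1}) are eigenvectors of R_ext with R_ext(ρ_{ij}^∓) = ± b_i b_j ρ_{ij}^∓ (i.e. R_ext ρ_{ij}^− = b_i b_j ρ_{ij}^− and R_ext ρ_{ij}^+ = −b_i b_j ρ_{ij}^+). -/

import Mathlib

/-!
In the canonical basis, `⟨h e_a, e_c⟩` vanishes unless `{a, c}` is a block `{2t-1, 2t}`.
So in the defining formula of `R_ext` with `X ∧ Y = e_{2i-1} ∧ e_{2j}` the first term drops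
out and the other two survive only for `Z ∧ W = e_{2i} ∧ e_{2j-1}`, and symmetrically: `R_ext`
swaps these two basis 2-vectors up to the factor `-b_i b_j`. Their normalized difference and
sum are therefore eigenvectors, for `b_i b_j` and `-b_i b_j`.
-/

open scoped BigOperators

namespace Paper

noncomputable section

/-- Coefficients of exterior forms w.r.t. the fixed orthonormal basis `e₁,…,e_q` of `V = ℝ^q`:
a form is identified with its family of coefficients indexed by subsets of `Fin q`. -/
abbrev Ext (q : ℕ) := Finset (Fin q) → ℝ

variable {q : ℕ}

/-- `(-1)^{#{j ∈ s | j < i}}` -/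
def sgn (i : Fin q) (s : Finset (Fin q)) : ℝ := (-1 : ℝ) ^ (s.filter fun j => j < i).card

/-- Exterior multiplication by the basis vector `e_i`. -/
def wB (i : Fin q) (ω : Ext q) : Ext q := fun s =>
  if i ∈ s then sgn i (s.erase i) * ω (s.erase i) else 0

/-- Interior product (contraction) with the basis vector `e_i`. -/
def iB (i : Fin q) (ω : Ext q) : Ext q := fun s =>
  if i ∈ s then 0 else sgn i s * ω (insert i s)

/-- The basis monomial `e_{i₁} ∧ ⋯ ∧ e_{i_p}`, for `s = {i₁ < ⋯ < i_p}`. -/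
def bF (s : Finset (Fin q)) : Ext q := fun t => if t = s then 1 else 0

/-- The basis vector `e_i` of `V = ℝ^q`. -/
def eB (i : Fin q) : Fin q → ℝ := Pi.single i 1

/-- Exterior multiplication by the vector `X ∈ V`. -/
def wV (X : Fin q → ℝ) (ω : Ext q) : Ext q := ∑ i, X i • wB i ω

/-- Interior product with the vector `X ∈ V`. -/
def iV (X : Fin q → ℝ) (ω : Ext q) : Ext q := ∑ i, X i • iB i ω

/-- Clifford multiplication `X · ω = X ∧ ω − X ⌟ ω` of a vector with a form. -/
def clV (X : Fin q → ℝ) (ω : Ext q) : Ext q := wV X ω - iV X ω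

/-- Clifford multiplication `e_{i₁} · e_{i₂} ⋯ e_{i_p} · ω` for `s = {i₁ < ⋯ < i_p}`. -/
def clB (s : Finset (Fin q)) (ω : Ext q) : Ext q :=
  (Finset.sort s (· ≤ ·)).foldr (fun i τ => clV (eB i) τ) ω

/-- Clifford multiplication of two forms. -/
def clM (ω₁ ω₂ : Ext q) : Ext q := ∑ s : Finset (Fin q), ω₁ s • clB s ω₂

/-- The bracket `[ω₁, ω₂] = ω₁ · ω₂ − ω₂ · ω₁`. -/
def brkt (ω₁ ω₂ : Ext q) : Ext q := clM ω₁ ω₂ - clM ω₂ ω₁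

/-- Exterior multiplication by the monomial `e_{i₁} ∧ ⋯ ∧ e_{i_p}`. -/
def wBs (s : Finset (Fin q)) (ω : Ext q) : Ext q :=
  (Finset.sort s (· ≤ ·)).foldr (fun i τ => wB i τ) ω

/-- The wedge product of two forms. -/
def wM (ω₁ ω₂ : Ext q) : Ext q := ∑ s : Finset (Fin q), ω₁ s • wBs s ω₂

/-- The inner product on forms, for which the basis monomials are orthonormal. -/
def ip (ω φ : Ext q) : ℝ := ∑ s : Finset (Fin q), ω s * φ s

/-- `ω` is a form of (pure) degree `p`. -/
def homog (p : ℕ) (ω : Ext q) : Prop := ∀ s : Finset (Fin q), s.card ≠ p → ω s = 0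

/-- The inner product of two vectors of `V = ℝ^q`. -/
def dotP (X Y : Fin q → ℝ) : ℝ := ∑ i, X i * Y i

/-- A vector of `V` regarded as a 1-form. -/
def oneF (X : Fin q → ℝ) : Ext q := ∑ i, X i • bF {i}

/-- The wedge `X ∧ Y` of two vectors. -/
def w2 (X Y : Fin q → ℝ) : Ext q := wV X (oneF Y)

/-- Two-element subsets, indexing the canonical orthonormal basis of `Λ²V`. -/
def twoSets (q : ℕ) : Finset (Finset (Fin q)) := Finset.univ.filter fun s => s.card = 2

/-- The Bochner operator quadratic form `⟨B_R^{[p]} ω, φ⟩ =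
(1/4) Σ_{r,s} ⟨R ψ_r, ψ_s⟩ ⟨[ψ_r,ω],[ψ_s,φ]⟩`, computed in the canonical
orthonormal basis `{e_i ∧ e_j}_{i<j}` of `Λ²V`. -/
def Bform (R : Ext q →ₗ[ℝ] Ext q) (ω φ : Ext q) : ℝ :=
  (1 / 4 : ℝ) * ∑ s ∈ twoSets q, ∑ t ∈ twoSets q,
    ip (R (bF s)) (bF t) * ip (brkt (bF s) ω) (brkt (bF t) φ)

lemma ip_eq_dotProduct (ω φ : Ext q) : ip ω φ = ω ⬝ᵥ φ := rfl

lemma dotP_eq_dotProduct (X Y : Fin q → ℝ) : dotP X Y = X ⬝ᵥ Y := rfl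

lemma bF_eq_single (s : Finset (Fin q)) : bF s = Pi.single s 1 := by
  ext t
  simp [bF, Pi.single_apply]

lemma homog_bF (s : Finset (Fin q)) : homog s.card (bF s) := by
  intro t ht
  simp only [bF, if_neg (fun hts : t = s => ht (hts ▸ rfl))]

lemma pair_eq_pair_iff_of_lt {k l a c : Fin q} (hkl : k < l) (hac : a < c) :
    ({k, l} : Finset (Fin q)) = {a, c} ↔ k = a ∧ l = c := by
  rw [← Finset.coe_inj, Finset.coe_pair, Finset.coe_pair, Set.pair_eq_pair_iff]
  refine ⟨fun h => h.resolve_right ?_, Or.inl⟩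
  rintro ⟨rfl, rfl⟩
  exact lt_asymm hkl hac

lemma oneF_eB (l : Fin q) : oneF (eB l) = bF {l} := by
  simp [oneF, eB, Pi.single_apply]

lemma wV_eB (k : Fin q) (ω : Ext q) : wV (eB k) ω = wB k ω := by
  simp [wV, eB, Pi.single_apply]

lemma wB_bF (k : Fin q) (s : Finset (Fin q)) :
    wB k (bF s) = if k ∈ s then 0 else sgn k s • bF (insert k s) := by
  ext t
  by_cases hks : k ∈ s
  · have : ¬ (k ∈ t ∧ t.erase k = s) := fun ⟨_, hts⟩ => Finset.notMem_erase k t (hts ▸ hks)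
    simp_all [wB, bF]
  · by_cases hts : t = insert k s
    · subst hts
      simp [wB, bF, hks, Finset.erase_insert hks]
    · have : ¬ (k ∈ t ∧ t.erase k = s) := fun ⟨hkt, hte⟩ => hts (hte ▸ (Finset.insert_erase hkt).symm)
      simp_all [wB, bF]

lemma w2_eB_eB_of_lt {k l : Fin q} (hkl : k < l) : w2 (eB k) (eB l) = bF {k, l} := by
  have hsgn : sgn k {l} = 1 := by
    simp [sgn, Finset.filter_singleton, not_lt.mpr hkl.le]
  rw [w2, oneF_eB, wV_eB, wB_bF, if_neg (by simpa using hkl.ne), hsgn, one_smul]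

lemma homog_two_ext {η φ : Ext q} (hη : homog 2 η) (hφ : homog 2 φ)
    (hc : ∀ k l : Fin q, k < l → ip η (bF {k, l}) = ip φ (bF {k, l})) : η = φ := by
  funext s
  by_cases h2 : s.card = 2
  · obtain ⟨x, y, hxy, rfl⟩ := Finset.card_eq_two.mp h2
    rcases hxy.lt_or_gt with hlt | hlt
    · simpa [ip_eq_dotProduct, bF_eq_single] using hc x y hlt
    · simpa [ip_eq_dotProduct, bF_eq_single, Finset.pair_comm] using hc y x hlt
  · rw [hη s h2, hφ s h2]

lemma homog.smul {p : ℕ} {ω : Ext q} (hω : homog p ω) (c : ℝ) : homog p (c • ω) := by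
  intro s hs
  simp [hω s hs]

lemma homog_bF_pair {k l : Fin q} (hkl : k ≠ l) : homog 2 (bF {k, l}) := by
  simpa [Finset.card_pair hkl] using homog_bF {k, l}

lemma dotP_smul_eB_eB (c : ℝ) (a l : Fin q) :
    dotP (c • eB a) (eB l) = if a = l then c else 0 := by
  simp [dotP_eq_dotProduct, eB, Pi.single_apply, eq_comm]

section ExteriorCurvature

variable {h : (Fin q → ℝ) →ₗ[ℝ] (Fin q → ℝ)} {Rext : Ext q →ₗ[ℝ] Ext q}

lemma extCurvature_apply_bF_pair (hR2 : ∀ η : Ext q, homog 2 η → homog 2 (Rext η))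
    (hRf : ∀ X Y Z W : Fin q → ℝ,
      ip (Rext (w2 X Y)) (w2 Z W)
        = 2 * dotP (h X) Y * dotP (h Z) W - dotP (h Y) Z * dotP (h X) W
            - dotP (h Z) X * dotP (h Y) W)
    {a b c d : Fin q} {β γ : ℝ} (had : a < d) (hbc : b < c) (hbd : b ≠ d)
    (ha : h (eB a) = β • eB b) (hd : h (eB d) = γ • eB c)
    (hskew : ∀ k, dotP (h (eB k)) (eB a) = -dotP (h (eB a)) (eB k)) :
    Rext (bF {a, d}) = (β * γ) • bF {b, c} := by
  refine homog_two_ext (hR2 _ (homog_bF_pair had.ne)) ((homog_bF_pair hbc.ne).smul _) ?_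
  intro k l hkl
  rw [← w2_eB_eB_of_lt had, ← w2_eB_eB_of_lt hkl, hRf, hskew, ha, hd, w2_eB_eB_of_lt hkl]
  simp only [dotP_smul_eB_eB, if_neg hbd, ip_eq_dotProduct, bF_eq_single, dotProduct_single,
    Pi.smul_apply, smul_eq_mul, mul_one, Pi.single_apply, pair_eq_pair_iff_of_lt hkl hbc]
  by_cases hkl_bc : k = b ∧ l = c
  · obtain ⟨rfl, rfl⟩ := hkl_bc
    simp [hbc.ne']
  · have hcb : ¬(c = k ∧ b = l) := by
      rintro ⟨rfl, rfl⟩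
      exact lt_asymm hkl hbc
    rw [if_neg hkl_bc]
    split_ifs <;> first | tauto | ring

end ExteriorCurvature

section CanonicalForm

variable {m : ℕ}

/-- 0-based: `evenIdx t` and `oddIdx t` index the paper's `e_{2t+1}` and `e_{2t+2}`. -/
abbrev evenIdx (t : Fin m) : Fin (2 * m) := ⟨2 * (t : ℕ), by omega⟩

abbrev oddIdx (t : Fin m) : Fin (2 * m) := ⟨2 * (t : ℕ) + 1, by omega⟩

lemma exists_eq_evenIdx_or_oddIdx (k : Fin (2 * m)) : ∃ t, k = evenIdx t ∨ k = oddIdx t := by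
  refine ⟨⟨k / 2, by omega⟩, ?_⟩
  simp only [evenIdx, oddIdx, Fin.ext_iff]
  omega

lemma evenIdx_inj {t u : Fin m} : evenIdx t = evenIdx u ↔ t = u := by
  simp [evenIdx, Fin.ext_iff]

lemma oddIdx_inj {t u : Fin m} : oddIdx t = oddIdx u ↔ t = u := by
  simp [oddIdx, Fin.ext_iff]

lemma evenIdx_lt_oddIdx {t u : Fin m} (htu : t < u) : evenIdx t < oddIdx u := by
  simp only [evenIdx, oddIdx, Fin.lt_def] at htu ⊢
  omega

lemma oddIdx_lt_evenIdx {t u : Fin m} (htu : t < u) : oddIdx t < evenIdx u := by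
  simp only [evenIdx, oddIdx, Fin.lt_def] at htu ⊢
  omega

lemma dotP_eB_antisymm_of_canonical {h : (Fin (2 * m) → ℝ) →ₗ[ℝ] (Fin (2 * m) → ℝ)}
    {b : Fin m → ℝ}
    (hcan : ∀ t, h (eB (evenIdx t)) = b t • eB (oddIdx t) ∧
      h (eB (oddIdx t)) = (-b t) • eB (evenIdx t))
    (k l : Fin (2 * m)) : dotP (h (eB k)) (eB l) = -dotP (h (eB l)) (eB k) := by
  obtain ⟨t, rfl | rfl⟩ := exists_eq_evenIdx_or_oddIdx k <;>
  obtain ⟨u, rfl | rfl⟩ := exists_eq_evenIdx_or_oddIdx l <;>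
  simp only [hcan, dotP_smul_eB_eB] <;> grind

end CanonicalForm

lemma ip_self_inv_sqrt_two_smul_bF_add {s t : Finset (Fin q)} (hst : s ≠ t) :
    ip ((√2)⁻¹ • (bF s + bF t)) ((√2)⁻¹ • (bF s + bF t)) = 1 := by
  simp only [bF_eq_single, smul_add, ip_eq_dotProduct, dotProduct_add, dotProduct_smul,
    dotProduct_single, Pi.add_apply, Pi.smul_apply, Pi.single_eq_same, smul_eq_mul, mul_one,
    Pi.single_eq_of_ne hst, Pi.single_eq_of_ne hst.symm, mul_zero, add_zero, zero_add]
  field_simp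
  norm_num

lemma ip_self_inv_sqrt_two_smul_bF_sub {s t : Finset (Fin q)} (hst : s ≠ t) :
    ip ((√2)⁻¹ • (bF s - bF t)) ((√2)⁻¹ • (bF s - bF t)) = 1 := by
  simp only [bF_eq_single, ip_eq_dotProduct, dotProduct_smul, dotProduct_sub, dotProduct_single,
    Pi.smul_apply, Pi.sub_apply, Pi.single_eq_same, Pi.single_eq_of_ne hst,
    Pi.single_eq_of_ne hst.symm, sub_zero, smul_eq_mul, mul_one, zero_sub, mul_neg, sub_neg_eq_add]
  field_simp
  norm_num


/-- For the O'Neill tensor `h` in canonical form on `V = ℝ^{2m}` and the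
exterior curvature operator `R_ext`, for `i < j` the unit 2-vectors
`ρ_{ij}^∓ = (1/√2)(e_{2i−1}∧e_{2j} ∓ e_{2i}∧e_{2j−1})` are eigenvectors of `R_ext` with
`R_ext ρ_{ij}^− = b_i b_j ρ_{ij}^−` and `R_ext ρ_{ij}^+ = −b_i b_j ρ_{ij}^+`.
(Indices are shifted: paper's `e_k` is `eB ⟨k-1, _⟩`.) -/
theorem statement_7 (m : ℕ)
    (h : (Fin (2 * m) → ℝ) →ₗ[ℝ] (Fin (2 * m) → ℝ)) (b : Fin m → ℝ)
    (hcan : ∀ k : Fin m,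
      h (eB ⟨2 * (k : ℕ), by have := k.isLt; omega⟩)
          = b k • eB ⟨2 * (k : ℕ) + 1, by have := k.isLt; omega⟩ ∧
        h (eB ⟨2 * (k : ℕ) + 1, by have := k.isLt; omega⟩)
          = (-(b k)) • eB ⟨2 * (k : ℕ), by have := k.isLt; omega⟩)
    (Rext : Ext (2 * m) →ₗ[ℝ] Ext (2 * m))
    (hR2 : ∀ η : Ext (2 * m), homog 2 η → homog 2 (Rext η))
    (hRf : ∀ X Y Z W : Fin (2 * m) → ℝ,
      ip (Rext (w2 X Y)) (w2 Z W)
        = 2 * dotP (h X) Y * dotP (h Z) W - dotP (h Y) Z * dotP (h X) W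
            - dotP (h Z) X * dotP (h Y) W)
    (i j : Fin m) (hij : i < j)
    (ρp ρm : Ext (2 * m))
    (hρp : ρp = (Real.sqrt 2)⁻¹ •
      (w2 (eB ⟨2 * (i : ℕ), by have := i.isLt; omega⟩)
            (eB ⟨2 * (j : ℕ) + 1, by have := j.isLt; omega⟩)
        + w2 (eB ⟨2 * (i : ℕ) + 1, by have := i.isLt; omega⟩)
            (eB ⟨2 * (j : ℕ), by have := j.isLt; omega⟩)))
    (hρm : ρm = (Real.sqrt 2)⁻¹ •
      (w2 (eB ⟨2 * (i : ℕ), by have := i.isLt; omega⟩)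
            (eB ⟨2 * (j : ℕ) + 1, by have := j.isLt; omega⟩)
        - w2 (eB ⟨2 * (i : ℕ) + 1, by have := i.isLt; omega⟩)
            (eB ⟨2 * (j : ℕ), by have := j.isLt; omega⟩))) :
    ip ρp ρp = 1 ∧ ip ρm ρm = 1 ∧
      Rext ρm = (b i * b j) • ρm ∧ Rext ρp = (-(b i * b j)) • ρp := by
  have hskew := dotP_eB_antisymm_of_canonical hcan
  have hAD : evenIdx i < oddIdx j := evenIdx_lt_oddIdx hij
  have hBC : oddIdx i < evenIdx j := oddIdx_lt_evenIdx hij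
  have hR_AD := extCurvature_apply_bF_pair hR2 hRf hAD hBC (oddIdx_inj.not.mpr hij.ne)
    (hcan i).1 (hcan j).2 (hskew · _)
  have hR_BC := extCurvature_apply_bF_pair hR2 hRf hBC hAD (evenIdx_inj.not.mpr hij.ne)
    (hcan i).2 (hcan j).1 (hskew · _)
  have hne : ({evenIdx i, oddIdx j} : Finset _) ≠ {oddIdx i, evenIdx j} := by
    simp [pair_eq_pair_iff_of_lt hAD hBC]
  rw [w2_eB_eB_of_lt hAD, w2_eB_eB_of_lt hBC] at hρp hρm
  subst hρp hρm
  refine ⟨ip_self_inv_sqrt_two_smul_bF_add hne, ip_self_inv_sqrt_two_smul_bF_sub hne, ?_, ?_⟩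
  · rw [map_smul, map_sub, hR_AD, hR_BC]
    module
  · rw [map_smul, map_add, hR_AD, hR_BC]
    module

end
end Paper
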